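/- Reordering of contractions in graphs: let G be a graph on vertices v_{1}, ..., v_{n} and let G' be obtained from G by a sequence of edge contractions (naming convention: contracting v_S v_T yields v_{S∪T}). Suppose v_i v_j is an edge of G and i, j ∈ T for some vertex v_T of G'. Then there exists a sequence of edge contractions from G to G' whose last contracted edge is v_I v_J with i ∈ I, j ∈ J, and I ∪ J = T. -/
import Mathlib


/-- A family of finite subsets is a simplicial complex if closed under subsets. -/
def IsComplex {V : Type*} (Δ : Set (Finset V)) : Prop :=
  ∀ F ∈ Δ, ∀ G : Finset V, G ⊆ F → G ∈ Δ

/-- Vertices arising from a complex on `[n]` by merging: indexed by subsets of `[n]`. -/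
abbrev Vtx (n : ℕ) := Finset (Fin n)

open Classical in
/-- Renaming map for the contraction of the edge `v_S v_T`: both `v_S` and `v_T`
become the merged vertex `v_{S ∪ T}`; other vertices keep their names. -/
noncomputable def renameV {n : ℕ} (S T X : Vtx n) : Vtx n :=
  if X = S ∨ X = T then S ∪ T else X

/-- Contraction of the edge `v_S v_T` in a complex whose vertices are indexed by
subsets of `[n]`: each face is replaced by its image under the renaming map. -/
noncomputable def contractC {n : ℕ} (Δ : Set (Finset (Vtx n))) (S T : Vtx n) :
    Set (Finset (Vtx n)) :=
  {G | ∃ F ∈ Δ, G = F.image (renameV S T)}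

/-- One edge contraction step between complexes, with the naming convention that
contracting `v_S v_T` yields the vertex `v_{S ∪ T}`. -/
def ContractStep {n : ℕ} (Δ Δ' : Set (Finset (Vtx n))) : Prop :=
  ∃ S T : Vtx n, S ≠ T ∧ ({S, T} : Finset (Vtx n)) ∈ Δ ∧ Δ' = contractC Δ S T

/-- The vertices of the initial complex are the singletons `{1}, …, {n}`. -/
def SingletonVerts {n : ℕ} (Δ : Set (Finset (Vtx n))) : Prop :=
  ∀ F ∈ Δ, ∀ X ∈ F, ∃ i : Fin n, X = ({i} : Finset (Fin n))

-- ## auxiliary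


def vertOf {n : ℕ} (Δ : Set (Finset (Vtx n))) (X : Vtx n) : Prop := ∃ F ∈ Δ, X ∈ F

structure Nice {n : ℕ} (Δ : Set (Finset (Vtx n))) : Prop where
  complex : IsComplex Δ
  dim : ∀ F ∈ Δ, F.card ≤ 2
  nonem : ∀ X, vertOf Δ X → X.Nonempty
  eq_mem : ∀ X Y, vertOf Δ X → vertOf Δ Y → ∀ a : Fin n, a ∈ X → a ∈ Y → X = Y

lemma renameV_eq_union {n : ℕ} {S T X : Vtx n} (h : X = S ∨ X = T) :
    renameV S T X = S ∪ T := by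
  simp only [renameV]; exact if_pos h

lemma renameV_eq_self {n : ℕ} {S T X : Vtx n} (h1 : X ≠ S) (h2 : X ≠ T) :
    renameV S T X = X := by
  simp only [renameV]; exact if_neg (by tauto)

lemma self_subset_renameV {n : ℕ} (S T X : Vtx n) : X ⊆ renameV S T X := by
  simp only [renameV]; split
  · rcases ‹X = S ∨ X = T› with rfl | rfl
    · exact Finset.subset_union_left
    · exact Finset.subset_union_right
  · exact Finset.Subset.refl _

lemma renameV_comm {n : ℕ} (S T : Vtx n) : renameV S T = renameV T S := by
  funext X
  simp only [renameV, Finset.union_comm S T, or_comm]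

lemma contractC_comm {n : ℕ} (Δ : Set (Finset (Vtx n))) (S T : Vtx n) :
    contractC Δ S T = contractC Δ T S := by
  simp only [contractC, renameV_comm S T]

lemma image_pair' {n : ℕ} (f : Vtx n → Vtx n) (A B : Vtx n) :
    ({A, B} : Finset (Vtx n)).image f = {f A, f B} := by
  simp [Finset.image_insert]

lemma vertOf_contractC {n : ℕ} {Δ : Set (Finset (Vtx n))} {S T X : Vtx n} :
    vertOf (contractC Δ S T) X ↔ ∃ Y, vertOf Δ Y ∧ X = renameV S T Y := by
  constructor
  · rintro ⟨F, ⟨F₀, hF₀, rfl⟩, hX⟩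
    obtain ⟨y, hy, rfl⟩ := Finset.mem_image.mp hX
    exact ⟨y, ⟨F₀, hF₀, hy⟩, rfl⟩
  · rintro ⟨Y, ⟨F₀, hF₀, hY⟩, rfl⟩
    exact ⟨F₀.image _, ⟨F₀, hF₀, rfl⟩, Finset.mem_image_of_mem _ hY⟩

lemma vert_left {n : ℕ} {Δ : Set (Finset (Vtx n))} {A B : Vtx n}
    (h : ({A, B} : Finset (Vtx n)) ∈ Δ) : vertOf Δ A :=
  ⟨_, h, Finset.mem_insert_self _ _⟩

lemma vert_right {n : ℕ} {Δ : Set (Finset (Vtx n))} {A B : Vtx n}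
    (h : ({A, B} : Finset (Vtx n)) ∈ Δ) : vertOf Δ B :=
  ⟨_, h, Finset.mem_insert_of_mem (Finset.mem_singleton_self _)⟩

lemma nice_step {n : ℕ} {Δ Δ' : Set (Finset (Vtx n))} (h : Nice Δ)
    (hs : ContractStep Δ Δ') : Nice Δ' := by
  obtain ⟨S, T, hST, hmem, rfl⟩ := hs
  have vS : vertOf Δ S := vert_left hmem
  have vT : vertOf Δ T := vert_right hmem
  constructor
  · rintro F ⟨F₀, hF₀, rfl⟩ G hG
    refine ⟨F₀.filter (fun x => renameV S T x ∈ G),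
      h.complex F₀ hF₀ _ (Finset.filter_subset _ _), ?_⟩
    apply Finset.Subset.antisymm
    · intro x hx
      obtain ⟨y, hy, rfl⟩ := Finset.mem_image.mp (hG hx)
      exact Finset.mem_image_of_mem _ (Finset.mem_filter.mpr ⟨hy, hx⟩)
    · intro x hx
      obtain ⟨y, hy, hyx⟩ := Finset.mem_image.mp hx
      exact hyx ▸ (Finset.mem_filter.mp hy).2
  · rintro F ⟨F₀, hF₀, rfl⟩
    exact (Finset.card_image_le).trans (h.dim F₀ hF₀)
  · intro X hX
    obtain ⟨Y, hY, rfl⟩ := vertOf_contractC.mp hX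
    exact (h.nonem Y hY).mono (self_subset_renameV _ _ _)
  · intro X' Y' hX' hY' a haX haY
    obtain ⟨X, hX, rfl⟩ := vertOf_contractC.mp hX'
    obtain ⟨Y, hY, rfl⟩ := vertOf_contractC.mp hY'
    by_cases hXc : X = S ∨ X = T <;> by_cases hYc : Y = S ∨ Y = T
    · rw [renameV_eq_union hXc, renameV_eq_union hYc]
    · rw [renameV_eq_union hXc] at haX
      rw [renameV_eq_self (fun h' => hYc (Or.inl h')) (fun h' => hYc (Or.inr h'))] at haY ⊢
      rcases Finset.mem_union.mp haX with hs | ht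
      · exact absurd (Or.inl (h.eq_mem Y S hY vS a haY hs)) hYc
      · exact absurd (Or.inr (h.eq_mem Y T hY vT a haY ht)) hYc
    · rw [renameV_eq_union hYc] at haY
      rw [renameV_eq_self (fun h' => hXc (Or.inl h')) (fun h' => hXc (Or.inr h'))] at haX ⊢
      rcases Finset.mem_union.mp haY with hs | ht
      · exact absurd (Or.inl (h.eq_mem X S hX vS a haX hs)) hXc
      · exact absurd (Or.inr (h.eq_mem X T hX vT a haX ht)) hXc
    · rw [renameV_eq_self (fun h' => hXc (Or.inl h')) (fun h' => hXc (Or.inr h'))] at haX ⊢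
      rw [renameV_eq_self (fun h' => hYc (Or.inl h')) (fun h' => hYc (Or.inr h'))] at haY ⊢
      exact h.eq_mem X Y hX hY a haX haY

lemma not_vert_union {n : ℕ} {Δ : Set (Finset (Vtx n))} (h : Nice Δ) {A B : Vtx n}
    (vA : vertOf Δ A) (vB : vertOf Δ B) (hAB : A ≠ B) : ¬ vertOf Δ (A ∪ B) := by
  intro hv
  obtain ⟨a, ha⟩ := h.nonem A vA
  have h1 : A ∪ B = A := h.eq_mem _ _ hv vA a (Finset.mem_union_left _ ha) ha
  obtain ⟨b, hb⟩ := h.nonem B vB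
  have h2 : A ∪ B = B := h.eq_mem _ _ hv vB b (Finset.mem_union_right _ hb) hb
  exact hAB (h1 ▸ h2)

lemma contractC_le {n : ℕ} {Δ : Set (Finset (Vtx n))} {P Q R S P' Q' R' S' : Vtx n}
    (h : ∀ X, vertOf Δ X → renameV R S (renameV P Q X) = renameV R' S' (renameV P' Q' X)) :
    contractC (contractC Δ P Q) R S ⊆ contractC (contractC Δ P' Q') R' S' := by
  rintro G ⟨F, ⟨F₀, hF₀, rfl⟩, rfl⟩
  refine ⟨F₀.image (renameV P' Q'), ⟨F₀, hF₀, rfl⟩, ?_⟩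
  rw [Finset.image_image, Finset.image_image]
  exact Finset.image_congr (fun x hx => h x ⟨F₀, hF₀, hx⟩)

lemma contractC_contractC {n : ℕ} {Δ : Set (Finset (Vtx n))} {P Q R S P' Q' R' S' : Vtx n}
    (h : ∀ X, vertOf Δ X → renameV R S (renameV P Q X) = renameV R' S' (renameV P' Q' X)) :
    contractC (contractC Δ P Q) R S = contractC (contractC Δ P' Q') R' S' :=
  Set.Subset.antisymm (contractC_le h) (contractC_le (fun X hX => (h X hX).symm))

lemma union_rc {n : ℕ} (A B C : Vtx n) : (A ∪ B) ∪ C = (A ∪ C) ∪ B := by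
  ext a; simp only [Finset.mem_union]; tauto

def InnerStmt {n : ℕ} (G' Γ : Set (Finset (Vtx n))) (T : Vtx n) : Prop :=
  ∀ (i j : Fin n) (A B : Vtx n) (Δ : Set (Finset (Vtx n))),
    Nice Δ → i ∈ T → j ∈ T → i ∈ A → j ∈ B → A ≠ B →
    ({A, B} : Finset (Vtx n)) ∈ Δ → contractC Δ A B = Γ →
    ∃ (G₀ : Set (Finset (Vtx n))) (I J : Vtx n),
      Relation.ReflTransGen ContractStep Δ G₀ ∧ i ∈ I ∧ j ∈ J ∧ I ∪ J = T ∧ I ≠ J ∧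
      ({I, J} : Finset (Vtx n)) ∈ G₀ ∧ contractC G₀ I J = G'

lemma merge_core {n : ℕ} {G' c : Set (Finset (Vtx n))} {T : Vtx n}
    (ih : InnerStmt G' c T)
    {i j : Fin n} {A B C : Vtx n} {Δ : Set (Finset (Vtx n))}
    (nΔ : Nice Δ) (hiT : i ∈ T) (hjT : j ∈ T) (hiA : i ∈ A) (hjB : j ∈ B)
    (hAB : A ≠ B) (hABm : ({A, B} : Finset (Vtx n)) ∈ Δ)
    (hCA : C ≠ A) (hCB : C ≠ B) (hACm : ({A, C} : Finset (Vtx n)) ∈ Δ)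
    (hc : c = contractC (contractC Δ A B) (A ∪ B) C) :
    ∃ (G₀ : Set (Finset (Vtx n))) (I J : Vtx n),
      Relation.ReflTransGen ContractStep Δ G₀ ∧ i ∈ I ∧ j ∈ J ∧ I ∪ J = T ∧ I ≠ J ∧
      ({I, J} : Finset (Vtx n)) ∈ G₀ ∧ contractC G₀ I J = G' := by
  have vA : vertOf Δ A := vert_left hABm
  have vB : vertOf Δ B := vert_right hABm
  have vC : vertOf Δ C := vert_right hACm
  have step : ContractStep Δ (contractC Δ A C) := ⟨A, C, hCA.symm, hACm, rfl⟩
  have nΔ' : Nice (contractC Δ A C) := nice_step nΔ step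
  have hedge : ({A ∪ C, B} : Finset (Vtx n)) ∈ contractC Δ A C := by
    refine ⟨{A, B}, hABm, ?_⟩
    rw [image_pair', renameV_eq_union (Or.inl rfl), renameV_eq_self hAB.symm hCB.symm]
  have hACB : A ∪ C ≠ B := by
    intro h
    obtain ⟨a, ha⟩ := nΔ.nonem A vA
    exact hAB (nΔ.eq_mem A B vA vB a ha (h ▸ Finset.mem_union_left _ ha))
  have hMnv : ¬ vertOf Δ (A ∪ B) := not_vert_union nΔ vA vB hAB
  have hMnv' : ¬ vertOf Δ (A ∪ C) := not_vert_union nΔ vA vC hCA.symm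
  have hcomp : contractC (contractC Δ A C) (A ∪ C) B = c := by
    rw [hc]
    refine (contractC_contractC ?_).symm
    intro X hX
    by_cases hXA : X = A
    · subst hXA
      rw [renameV_eq_union (Or.inl rfl), renameV_eq_union (Or.inl rfl),
        renameV_eq_union (Or.inl rfl), renameV_eq_union (Or.inl rfl), union_rc]
    · by_cases hXB : X = B
      · subst hXB
        rw [renameV_eq_union (Or.inr rfl), renameV_eq_union (Or.inl rfl),
          renameV_eq_self hXA hCB.symm, renameV_eq_union (Or.inr rfl), union_rc]
      · by_cases hXC : X = C
        · subst hXC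
          rw [renameV_eq_self hXA hXB, renameV_eq_union (Or.inr rfl),
            renameV_eq_union (Or.inr rfl), renameV_eq_union (Or.inl rfl), union_rc]
        · have h1 : X ≠ A ∪ B := fun h => hMnv (h ▸ hX)
          have h2 : X ≠ A ∪ C := fun h => hMnv' (h ▸ hX)
          rw [renameV_eq_self hXA hXB, renameV_eq_self h1 hXC,
            renameV_eq_self hXA hXC, renameV_eq_self h2 hXB]
  obtain ⟨G₀, I, J, rtg, h1, h2, h3, h4, h5, h6⟩ :=
    ih i j (A ∪ C) B (contractC Δ A C) nΔ' hiT hjT (Finset.mem_union_left _ hiA) hjB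
      hACB hedge hcomp
  exact ⟨G₀, I, J, rtg.head step, h1, h2, h3, h4, h5, h6⟩

lemma merge_case {n : ℕ} {G' c : Set (Finset (Vtx n))} {T : Vtx n}
    (ih : InnerStmt G' c T)
    {i j : Fin n} {A B C : Vtx n} {Δ : Set (Finset (Vtx n))}
    (nΔ : Nice Δ) (hiT : i ∈ T) (hjT : j ∈ T) (hiA : i ∈ A) (hjB : j ∈ B)
    (hAB : A ≠ B) (hABm : ({A, B} : Finset (Vtx n)) ∈ Δ)
    (hMC : A ∪ B ≠ C)
    (hpm : ({A ∪ B, C} : Finset (Vtx n)) ∈ contractC Δ A B)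
    (hc : c = contractC (contractC Δ A B) (A ∪ B) C) :
    ∃ (G₀ : Set (Finset (Vtx n))) (I J : Vtx n),
      Relation.ReflTransGen ContractStep Δ G₀ ∧ i ∈ I ∧ j ∈ J ∧ I ∪ J = T ∧ I ≠ J ∧
      ({I, J} : Finset (Vtx n)) ∈ G₀ ∧ contractC G₀ I J = G' := by
  have vA : vertOf Δ A := vert_left hABm
  have vB : vertOf Δ B := vert_right hABm
  have hMnv : ¬ vertOf Δ (A ∪ B) := not_vert_union nΔ vA vB hAB
  obtain ⟨F, hF, hFim⟩ := hpm
  have himg : F.image (renameV A B) = {A ∪ B, C} := hFim.symm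
  have vFx : ∀ x ∈ F, vertOf Δ x := fun x hx => ⟨F, hF, hx⟩
  -- C comes from itself
  have hCm : C ∈ F.image (renameV A B) := himg ▸ (by simp)
  obtain ⟨c0, hc0F, hc0⟩ := Finset.mem_image.mp hCm
  have hc0n : ¬(c0 = A ∨ c0 = B) := by
    intro h; rw [renameV_eq_union h] at hc0; exact hMC hc0
  have hc0C : c0 = C := by
    rwa [renameV_eq_self (fun h => hc0n (Or.inl h)) (fun h => hc0n (Or.inr h))] at hc0
  have hCA : C ≠ A := fun h => hc0n (Or.inl (hc0C.trans h))
  have hCB : C ≠ B := fun h => hc0n (Or.inr (hc0C.trans h))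
  have hCF : C ∈ F := hc0C ▸ hc0F
  -- A ∪ B comes from A or from B
  have hMm : A ∪ B ∈ F.image (renameV A B) := himg ▸ (by simp)
  obtain ⟨y, hyF, hy⟩ := Finset.mem_image.mp hMm
  have hyAB : y = A ∨ y = B := by
    by_contra h
    push_neg at h
    rw [renameV_eq_self h.1 h.2] at hy
    exact hMnv (hy ▸ vFx y hyF)
  rcases hyAB with rfl | rfl
  · have hFeq : ({y, C} : Finset (Vtx n)) = F := by
      apply Finset.eq_of_subset_of_card_le
      · intro x hx
        rcases Finset.mem_insert.mp hx with rfl | hx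
        · exact hyF
        · exact (Finset.mem_singleton.mp hx) ▸ hCF
      · rw [Finset.card_pair (fun h => hCA h.symm)]
        exact nΔ.dim F hF
    exact merge_core ih nΔ hiT hjT hiA hjB hAB hABm hCA hCB (hFeq ▸ hF) hc
  · have hFeq : ({y, C} : Finset (Vtx n)) = F := by
      apply Finset.eq_of_subset_of_card_le
      · intro x hx
        rcases Finset.mem_insert.mp hx with rfl | hx
        · exact hyF
        · exact (Finset.mem_singleton.mp hx) ▸ hCF
      · rw [Finset.card_pair (fun h => hCB h.symm)]
        exact nΔ.dim F hF
    have hABm' : ({y, A} : Finset (Vtx n)) ∈ Δ := by rwa [Finset.pair_comm]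
    have hc' : c = contractC (contractC Δ y A) (y ∪ A) C := by
      rwa [contractC_comm Δ y A, Finset.union_comm y A]
    obtain ⟨G₀, I, J, rtg, h1, h2, h3, h4, h5, h6⟩ :=
      merge_core ih nΔ hjT hiT hjB hiA hAB.symm hABm' hCB hCA (hFeq ▸ hF) hc'
    exact ⟨G₀, J, I, rtg, h2, h1, (Finset.union_comm J I).trans h3, h4.symm,
      (Finset.pair_comm J I) ▸ h5, (contractC_comm G₀ J I).trans h6⟩

lemma inner_lemma {n : ℕ} {G' : Set (Finset (Vtx n))} {T : Vtx n} (hT : vertOf G' T) :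
    ∀ Γ, Relation.ReflTransGen ContractStep Γ G' → InnerStmt G' Γ T := by
  intro Γ hΓ
  induction hΓ using Relation.ReflTransGen.head_induction_on with
  | refl =>
    intro i j A B Δ nΔ hiT hjT hiA hjB hAB hABm heq
    have nG' : Nice G' := nice_step nΔ ⟨A, B, hAB, hABm, heq.symm⟩
    have vM : vertOf G' (A ∪ B) := by
      rw [← heq]
      exact vertOf_contractC.mpr ⟨A, vert_left hABm, (renameV_eq_union (Or.inl rfl)).symm⟩
    have hTM : T = A ∪ B := nG'.eq_mem T (A ∪ B) hT vM i hiT (Finset.mem_union_left _ hiA)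
    exact ⟨Δ, A, B, Relation.ReflTransGen.refl, hiA, hjB, hTM.symm, hAB, hABm, heq⟩
  | @head a c hstep htail ih =>
    intro i j A B Δ nΔ hiT hjT hiA hjB hAB hABm heq
    obtain ⟨S, T', hST', hSTm, hc⟩ := hstep
    subst heq
    have vA : vertOf Δ A := vert_left hABm
    have vB : vertOf Δ B := vert_right hABm
    have hMnv : ¬ vertOf Δ (A ∪ B) := not_vert_union nΔ vA vB hAB
    by_cases hSM : S = A ∪ B
    · subst hSM
      exact merge_case ih nΔ hiT hjT hiA hjB hAB hABm hST' hSTm hc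
    · by_cases hTM : T' = A ∪ B
      · subst hTM
        have hpm : ({A ∪ B, S} : Finset (Vtx n)) ∈ contractC Δ A B := by
          rwa [Finset.pair_comm]
        have hc' : c = contractC (contractC Δ A B) (A ∪ B) S := by
          rwa [contractC_comm]
        exact merge_case ih nΔ hiT hjT hiA hjB hAB hABm (fun h => hSM h.symm) hpm hc'
      · -- commuting case
        obtain ⟨F, hF, hFim⟩ := hSTm
        have himg : F.image (renameV A B) = {S, T'} := hFim.symm
        have vFx : ∀ x ∈ F, vertOf Δ x := fun x hx => ⟨F, hF, hx⟩
        have hSmem : ∀ x ∈ F, renameV A B x ∈ ({S, T'} : Finset (Vtx n)) :=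
          fun x hx => himg ▸ Finset.mem_image_of_mem _ hx
        have hFnotAB : ∀ x ∈ F, x ≠ A ∧ x ≠ B := by
          intro x hx
          have key : ¬(x = A ∨ x = B) := by
            intro h
            have h2 := hSmem x hx
            rw [renameV_eq_union h] at h2
            rcases Finset.mem_insert.mp h2 with h3 | h3
            · exact hSM h3.symm
            · exact hTM (Finset.mem_singleton.mp h3).symm
          exact ⟨fun h => key (Or.inl h), fun h => key (Or.inr h)⟩
        have hFsub : F ⊆ {S, T'} := by
          intro x hx
          have h := hSmem x hx
          rwa [renameV_eq_self (hFnotAB x hx).1 (hFnotAB x hx).2] at h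
        have hSF : S ∈ F := by
          have h : S ∈ F.image (renameV A B) := himg ▸ (by simp)
          obtain ⟨y, hy, hyS⟩ := Finset.mem_image.mp h
          rw [renameV_eq_self (hFnotAB y hy).1 (hFnotAB y hy).2] at hyS
          exact hyS ▸ hy
        have hT'F : T' ∈ F := by
          have h : T' ∈ F.image (renameV A B) := himg ▸ (by simp)
          obtain ⟨y, hy, hyS⟩ := Finset.mem_image.mp h
          rw [renameV_eq_self (hFnotAB y hy).1 (hFnotAB y hy).2] at hyS
          exact hyS ▸ hy
        have hFeq : F = {S, T'} :=
          Finset.Subset.antisymm hFsub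
            (Finset.insert_subset_iff.mpr ⟨hSF, Finset.singleton_subset_iff.mpr hT'F⟩)
        have hSTd : ({S, T'} : Finset (Vtx n)) ∈ Δ := hFeq ▸ hF
        have vS : vertOf Δ S := vert_left hSTd
        have vT' : vertOf Δ T' := vert_right hSTd
        have hSA : S ≠ A := (hFnotAB S hSF).1
        have hSB : S ≠ B := (hFnotAB S hSF).2
        have hT'A : T' ≠ A := (hFnotAB T' hT'F).1
        have hT'B : T' ≠ B := (hFnotAB T' hT'F).2
        have hSTnv : ¬ vertOf Δ (S ∪ T') := not_vert_union nΔ vS vT' hST'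
        have step : ContractStep Δ (contractC Δ S T') := ⟨S, T', hST', hSTd, rfl⟩
        have nΔ' : Nice (contractC Δ S T') := nice_step nΔ step
        have hedge : ({A, B} : Finset (Vtx n)) ∈ contractC Δ S T' := by
          refine ⟨{A, B}, hABm, ?_⟩
          rw [image_pair', renameV_eq_self hSA.symm hT'A.symm,
            renameV_eq_self hSB.symm hT'B.symm]
        have hMSne : A ∪ B ≠ S := fun h => hSM h.symm
        have hMTne : A ∪ B ≠ T' := fun h => hTM h.symm
        have hSTAne : S ∪ T' ≠ A := fun h => hSTnv (by rw [h]; exact vA)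
        have hSTBne : S ∪ T' ≠ B := fun h => hSTnv (by rw [h]; exact vB)
        have hcomp : contractC (contractC Δ S T') A B = c := by
          rw [hc]
          refine contractC_contractC ?_
          intro X hX
          by_cases hXA : X = A
          · subst hXA
            rw [renameV_eq_self hSA.symm hT'A.symm, renameV_eq_union (Or.inl rfl),
              renameV_eq_self hMSne hMTne]
          · by_cases hXB : X = B
            · subst hXB
              rw [renameV_eq_self hSB.symm hT'B.symm, renameV_eq_union (Or.inr rfl),
                renameV_eq_self hMSne hMTne]
            · by_cases hXS : X = S
              · subst hXS
                rw [renameV_eq_union (Or.inl rfl), renameV_eq_self hSTAne hSTBne,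
                  renameV_eq_self hXA hXB, renameV_eq_union (Or.inl rfl)]
              · by_cases hXT : X = T'
                · subst hXT
                  rw [renameV_eq_union (Or.inr rfl), renameV_eq_self hSTAne hSTBne,
                    renameV_eq_self hXA hXB, renameV_eq_union (Or.inr rfl)]
                · rw [renameV_eq_self hXS hXT, renameV_eq_self hXA hXB,
                    renameV_eq_self hXS hXT]
        obtain ⟨G₀, I, J, rtg, h1, h2, h3, h4, h5, h6⟩ :=
          ih i j A B (contractC Δ S T') nΔ' hiT hjT hiA hjB hAB hedge hcomp
        exact ⟨G₀, I, J, rtg.head step, h1, h2, h3, h4, h5, h6⟩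

lemma outer_lemma {n : ℕ} {G' : Set (Finset (Vtx n))} {T : Vtx n} (hT : vertOf G' T) :
    ∀ Δ, Relation.ReflTransGen ContractStep Δ G' →
    ∀ (i j : Fin n) (A B : Vtx n),
      Nice Δ → i ∈ T → j ∈ T → i ∈ A → j ∈ B → A ≠ B →
      ({A, B} : Finset (Vtx n)) ∈ Δ →
      ∃ (G₀ : Set (Finset (Vtx n))) (I J : Vtx n),
        Relation.ReflTransGen ContractStep Δ G₀ ∧ i ∈ I ∧ j ∈ J ∧ I ∪ J = T ∧ I ≠ J ∧
        ({I, J} : Finset (Vtx n)) ∈ G₀ ∧ contractC G₀ I J = G' := by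
  intro Δ h
  induction h using Relation.ReflTransGen.head_induction_on with
  | refl =>
    intro i j A B nΔ hiT hjT hiA hjB hAB hABm
    have hA : A = T := nΔ.eq_mem A T (vert_left hABm) hT i hiA hiT
    have hB : B = T := nΔ.eq_mem B T (vert_right hABm) hT j hjB hjT
    exact absurd (hA.trans hB.symm) hAB
  | @head a c hstep htail ih =>
    intro i j A B nΔ hiT hjT hiA hjB hAB hABm
    obtain ⟨S, T', hST', hSTm, hc⟩ := hstep
    by_cases hpair : S = A ∧ T' = B ∨ S = B ∧ T' = A
    · have hc' : c = contractC a A B := by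
        rcases hpair with ⟨rfl, rfl⟩ | ⟨rfl, rfl⟩
        · exact hc
        · exact hc.trans (contractC_comm a _ _)
      exact inner_lemma hT c htail i j A B a nΔ hiT hjT hiA hjB hAB hABm hc'.symm
    · have vS : vertOf a S := vert_left hSTm
      have vT' : vertOf a T' := vert_right hSTm
      have hSTnv : ¬ vertOf a (S ∪ T') := not_vert_union nΔ vS vT' hST'
      have nC : Nice c := nice_step nΔ ⟨S, T', hST', hSTm, hc⟩
      have hAB' : renameV S T' A ≠ renameV S T' B := by
        by_cases hA : A = S ∨ A = T' <;> by_cases hB : B = S ∨ B = T'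
        · exfalso
          rcases hA with rfl | rfl <;> rcases hB with rfl | rfl
          · exact hAB rfl
          · exact hpair (Or.inl ⟨rfl, rfl⟩)
          · exact hpair (Or.inr ⟨rfl, rfl⟩)
          · exact hAB rfl
        · rw [renameV_eq_union hA,
            renameV_eq_self (fun h => hB (Or.inl h)) (fun h => hB (Or.inr h))]
          exact fun h => hSTnv (by rw [h]; exact vert_right hABm)
        · rw [renameV_eq_union hB,
            renameV_eq_self (fun h => hA (Or.inl h)) (fun h => hA (Or.inr h))]
          exact fun h => hSTnv (by rw [← h]; exact vert_left hABm)
        · rw [renameV_eq_self (fun h => hA (Or.inl h)) (fun h => hA (Or.inr h)),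
            renameV_eq_self (fun h => hB (Or.inl h)) (fun h => hB (Or.inr h))]
          exact hAB
      have hedge' : ({renameV S T' A, renameV S T' B} : Finset (Vtx n)) ∈ c := by
        rw [hc]; exact ⟨{A, B}, hABm, (image_pair' _ _ _).symm⟩
      obtain ⟨G₀, I, J, rtg, h1, h2, h3, h4, h5, h6⟩ :=
        ih i j (renameV S T' A) (renameV S T' B) nC hiT hjT
          (self_subset_renameV _ _ _ hiA) (self_subset_renameV _ _ _ hjB) hAB' hedge'
      exact ⟨G₀, I, J, rtg.head ⟨S, T', hST', hSTm, hc⟩, h1, h2, h3, h4, h5, h6⟩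


/-- reordering of contractions in graphs (modelled as simplicial
complexes of dimension at most 1). If `v_i v_j` is an edge of `G` and `i, j` lie in
the index set `T` of one vertex of `G'`, then `G'` can be obtained from `G` by a
sequence of contractions whose last contracted edge is `v_I v_J` with `i ∈ I`,
`j ∈ J` and `I ∪ J = T`. -/
theorem reorder_contractions {n : ℕ} (G G' : Set (Finset (Vtx n)))
    (hG : IsComplex G) (hdim : ∀ F ∈ G, F.card ≤ 2) (hinit : SingletonVerts G)
    (hseq : Relation.ReflTransGen ContractStep G G')
    (i j : Fin n) (hij : i ≠ j)
    (hedge : ({({i} : Finset (Fin n)), ({j} : Finset (Fin n))} : Finset (Vtx n)) ∈ G)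
    (T : Vtx n) (hT : ({T} : Finset (Vtx n)) ∈ G') (hiT : i ∈ T) (hjT : j ∈ T) :
    ∃ (G₀ : Set (Finset (Vtx n))) (I J : Vtx n),
      Relation.ReflTransGen ContractStep G G₀ ∧
      i ∈ I ∧ j ∈ J ∧ I ∪ J = T ∧ I ≠ J ∧
      ({I, J} : Finset (Vtx n)) ∈ G₀ ∧ contractC G₀ I J = G' := by
  have nG : Nice G := by
    refine ⟨hG, hdim, ?_, ?_⟩
    · intro X hX
      obtain ⟨F, hF, hXF⟩ := hX
      obtain ⟨k, rfl⟩ := hinit F hF X hXF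
      exact ⟨k, Finset.mem_singleton_self k⟩
    · intro X Y hX hY a haX haY
      obtain ⟨F, hF, hXF⟩ := hX
      obtain ⟨k, rfl⟩ := hinit F hF X hXF
      obtain ⟨F', hF', hYF⟩ := hY
      obtain ⟨l, rfl⟩ := hinit F' hF' Y hYF
      rw [Finset.mem_singleton] at haX haY
      rw [← haX, ← haY]
  have hTv : vertOf G' T := ⟨{T}, hT, Finset.mem_singleton_self T⟩
  have hne : ({i} : Finset (Fin n)) ≠ {j} := fun h => hij (Finset.singleton_injective h)
  exact outer_lemma hTv G hseq i j {i} {j} nG hiT hjT (Finset.mem_singleton_self i)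
    (Finset.mem_singleton_self j) hne hedge
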